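/- arXiv:1901.02084 — 3 statements merged into one kernel-verified Lean document; each statement's English description precedes it below -/
import Mathlib

section
/- For a linear distribution H on a vector bundle π: E → M, the intersection H ∩ T^π E is canonically isomorphic to the π-pullback of its restriction to the zero section: H ∩ T^π E ≅ π*((H ∩ T^π E)|_M), via the fibrewise right-translation da_e(V) = da(V, 0_{-e}). -/
/-!
STATEMENT 10: For a linear distribution H on a vector bundle π : E → M, the vertical
part H ∩ T^π E is canonically isomorphic to the π-pullback of its restriction to the
zero section, via the fibrewise right-translation da_e(V) = da(V, 0_{-e}).

Local model: the bundle is `B × V → B`; the tangent space at any point of the total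
space is `B × V`, `dπ = fst`, vertical vectors are those of the form `(0, ν)`, and the
right translation `da_e` identifies the vertical vector `(0,ν)` at `(x,v)` with the
vertical vector `(0,ν)` at `(x,0)`, i.e. with the element `ν` of the fibre `E_x = V`.
The claim is that under this identification the symbol `H ∩ T^π E` at `(x,v)`
coincides with its value at the zero section `(x,0)`.
-/

variable {B V : Type*} [AddCommGroup B] [Module ℝ B] [AddCommGroup V] [Module ℝ V]

/-- `H` is a linear distribution on the vector bundle `B × V → B`. -/
def IsLinearDistribution (H : B × V → Submodule ℝ (B × V)) : Prop :=
  (∀ (x ξ : B), ((ξ, (0 : V)) : B × V) ∈ H (x, 0)) ∧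
  (∀ (x : B) (v w : V) (ξ : B) (ν ω : V),
      ((ξ, ν) : B × V) ∈ H (x, v) → ((ξ, ω) : B × V) ∈ H (x, w) →
        ((ξ, ν + ω) : B × V) ∈ H (x, v + w)) ∧
  (∀ (x : B) (v : V) (c : ℝ) (ξ : B) (ν : V),
      ((ξ, ν) : B × V) ∈ H (x, v) → ((ξ, c • ν) : B × V) ∈ H (x, c • v))

namespace IsLinearDistribution

variable {H : B × V → Submodule ℝ (B × V)}

-- Right translation `da(·, 0_w)`: add the zero vector of `H (x, w)` fibrewise.
theorem vertical_mem_add (hH : IsLinearDistribution H) {x : B} {v ν : V}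
    (h : (((0 : B), ν) : B × V) ∈ H (x, v)) (w : V) :
    (((0 : B), ν) : B × V) ∈ H (x, v + w) := by
  simpa using hH.2.1 x v w 0 ν 0 h (H (x, w)).zero_mem

theorem vertical_mem_iff (hH : IsLinearDistribution H) (x : B) (v w ν : V) :
    (((0 : B), ν) : B × V) ∈ H (x, v) ↔ (((0 : B), ν) : B × V) ∈ H (x, w) := by
  constructor
  · intro h
    simpa using hH.vertical_mem_add h (w - v)
  · intro h
    simpa using hH.vertical_mem_add h (v - w)

end IsLinearDistribution

/-- `H ∩ T^π E ≅ π*((H ∩ T^π E)|_M)` via right translation to the zero section. -/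
theorem verticalPart_eq_pullback (H : B × V → Submodule ℝ (B × V))
    (hH : IsLinearDistribution H) :
    ∀ (x : B) (v ν : V),
      (((0 : B), ν) : B × V) ∈ H (x, v) ↔ (((0 : B), ν) : B × V) ∈ H (x, 0) :=
  fun x v ν => hH.vertical_mem_iff x v 0 ν
end

section
/- There is a bijection between pointwise surjective linear 1-forms θ ∈ Ω^1(E, π*F) on a vector bundle π: E → M and connections on E relative to surjective bundle maps σ: E → F, given by D(s) = s*θ and σ(v) = θ(v) for v ∈ E = T^π E|_M; conversely, D and σ uniquely determine a linear form θ with s*θ = D(s) for all sections s and θ|_{T^π E|_M} = σ. -/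
/-!
STATEMENT 11: There is a bijection between pointwise surjective linear 1-forms
θ ∈ Ω¹(E, π*F) on a vector bundle π : E → M and connections on E relative to surjective
bundle maps σ : E → F, given by D(s) = s*θ and σ(v) = θ(v) for v ∈ E = T^π E|_M;
conversely (D,σ) uniquely determines such a linear θ.

Local model: the bundle is `B × V → B` (trivialised over a chart `B`); the tangent
space at any point of the total space is `B × V`; a 1-form with values in the pullback
of the bundle `F` (fibre `Fv`) is a family `θ : B × V → ((B × V) →ₗ[ℝ] Fv)`, linearity
meaning `a*θ = pr₁*θ + pr₂*θ`. For a (smooth) section `s : B → V`, the pullback `s*θ`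
is `ξ ↦ θ (x, s x) (ξ, d_x s (ξ))`, and `σ` is `θ` restricted to the vertical vectors
along the zero section.
-/

variable {B V Fv : Type*}
  [NormedAddCommGroup B] [NormedSpace ℝ B] [FiniteDimensional ℝ B]
  [NormedAddCommGroup V] [NormedSpace ℝ V] [FiniteDimensional ℝ V]
  [NormedAddCommGroup Fv] [NormedSpace ℝ Fv] [FiniteDimensional ℝ Fv]

/-- `θ` is a linear form on the vector bundle `B × V → B`: `a*θ = pr₁*θ + pr₂*θ`. -/
def IsLinearForm (θ : B × V → ((B × V) →ₗ[ℝ] Fv)) : Prop :=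
  ∀ (x : B) (v w : V) (ξ : B) (ν ω : V),
    θ (x, v + w) (ξ, ν + ω) = θ (x, v) (ξ, ν) + θ (x, w) (ξ, ω)

/-- The pullback `s*θ` of a form along a section `s`, i.e. the relative connection
`D(s)` associated to `θ`. -/
noncomputable def Dform (θ : B × V → ((B × V) →ₗ[ℝ] Fv)) (s : B → V) (x : B) (ξ : B) :
    Fv :=
  θ (x, s x) (ξ, fderiv ℝ s x ξ)

/-- The symbol `σ` of `θ`: the restriction of `θ` to vertical vectors along the zero
section, under the identification `T^π E|_M = E`. -/
def σform (θ : B × V → ((B × V) →ₗ[ℝ] Fv)) (x : B) (v : V) : Fv :=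
  θ (x, 0) (0, v)

lemma lf_zero {θ : B × V → ((B × V) →ₗ[ℝ] Fv)} (hlin : IsLinearForm θ) (x ξ : B) :
    θ (x, 0) (ξ, 0) = 0 := by
  have h := hlin x 0 0 ξ 0 0
  simp only [add_zero] at h
  exact left_eq_add.mp h

lemma lf_split {θ : B × V → ((B × V) →ₗ[ℝ] Fv)} (hlin : IsLinearForm θ)
    (x : B) (v : V) (ξ : B) (ν : V) :
    θ (x, v) (ξ, ν) = θ (x, v) (ξ, 0) + θ (x, 0) (0, ν) := by
  have h := hlin x v 0 ξ 0 ν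
  simp only [add_zero, zero_add] at h
  have h2 : θ (x, 0) (ξ, ν) = θ (x, 0) (ξ, 0) + θ (x, 0) (0, ν) := by
    have hv : ((ξ, ν) : B × V) = (ξ, 0) + (0, ν) := by simp
    rw [hv, map_add]
  rw [h, h2, lf_zero hlin, zero_add]

lemma lf_smul {θ : B × V → ((B × V) →ₗ[ℝ] Fv)} (hlin : IsLinearForm θ)
    (hθ : ContDiff ℝ (⊤ : ℕ∞) (fun q : (B × V) × (B × V) => θ q.1 q.2))
    (x ξ : B) (c : ℝ) (v : V) :
    θ (x, c • v) (ξ, 0) = c • θ (x, v) (ξ, 0) := by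
  have hA : ∀ v w : V, θ (x, v + w) (ξ, 0) = θ (x, v) (ξ, 0) + θ (x, w) (ξ, 0) := by
    intro v w
    simpa using hlin x v w ξ 0 0
  let A : V →+ Fv := AddMonoidHom.mk' (fun v => θ (x, v) (ξ, 0)) hA
  have hcont : Continuous A := by
    have : Continuous fun v : V => ((x, v), ((ξ, 0) : B × V)) :=
      (continuous_const.prodMk continuous_id).prodMk continuous_const
    exact hθ.continuous.comp this
  exact map_real_smul A hcont c v

set_option linter.unusedSectionVars false in
theorem linearForms_biject_with_relativeConnections :
    -- forward direction: a pointwise surjective (smooth) linear form induces a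
    -- relative connection D(s) = s*θ with surjective symbol σ = θ|_{T^π E|_M}:
    (∀ θ : B × V → ((B × V) →ₗ[ℝ] Fv), IsLinearForm θ →
      ContDiff ℝ (⊤ : ℕ∞) (fun q : (B × V) × (B × V) => θ q.1 q.2) →
      (∀ p : B × V, Function.Surjective (θ p)) →
      ((∀ s t : B → V, ContDiff ℝ (⊤ : ℕ∞) s → ContDiff ℝ (⊤ : ℕ∞) t → ∀ x ξ,
          Dform θ (s + t) x ξ = Dform θ s x ξ + Dform θ t x ξ) ∧
       (∀ (c : ℝ) (s : B → V), ContDiff ℝ (⊤ : ℕ∞) s → ∀ x ξ,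
          Dform θ (c • s) x ξ = c • Dform θ s x ξ) ∧
       (∀ (f : B → ℝ) (s : B → V), ContDiff ℝ (⊤ : ℕ∞) f → ContDiff ℝ (⊤ : ℕ∞) s → ∀ x ξ,
          Dform θ (fun y => f y • s y) x ξ
            = f x • Dform θ s x ξ + fderiv ℝ f x ξ • σform θ x (s x)) ∧
       (∀ x, Function.Surjective (σform θ x)) ∧
       (∀ x, IsLinearMap ℝ (σform θ x)))) ∧
    -- converse direction: a relative connection (D, σ) comes from a unique linear form:
    (∀ (D : (B → V) → B → B →ₗ[ℝ] Fv) (σ : B → (V →ₗ[ℝ] Fv)),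
      (∀ s t : B → V, ContDiff ℝ (⊤ : ℕ∞) s → ContDiff ℝ (⊤ : ℕ∞) t → D (s + t) = D s + D t) →
      (∀ (c : ℝ) (s : B → V), ContDiff ℝ (⊤ : ℕ∞) s → D (c • s) = c • D s) →
      (∀ (f : B → ℝ) (s : B → V), ContDiff ℝ (⊤ : ℕ∞) f → ContDiff ℝ (⊤ : ℕ∞) s → ∀ x ξ,
          D (fun y => f y • s y) x ξ = f x • D s x ξ + fderiv ℝ f x ξ • σ x (s x)) →
      (∀ x, Function.Surjective (σ x)) →
      ∃! θ : B × V → ((B × V) →ₗ[ℝ] Fv),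
        IsLinearForm θ ∧
        (∀ s : B → V, ContDiff ℝ (⊤ : ℕ∞) s → ∀ x ξ, Dform θ s x ξ = D s x ξ) ∧
        (∀ x v, σform θ x v = σ x v)) := by
  constructor
  · -- forward direction
    intro θ hlin hθ hsurj
    refine ⟨?_, ?_, ?_, ?_, ?_⟩
    · -- additivity
      intro s t hs ht x ξ
      have hds : DifferentiableAt ℝ s x := (hs.differentiable (by simp)) x
      have hdt : DifferentiableAt ℝ t x := (ht.differentiable (by simp)) x
      have h1 : Dform θ (s + t) x ξ
          = θ (x, s x + t x) (ξ, fderiv ℝ s x ξ + fderiv ℝ t x ξ) := by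
        simp only [Dform, Pi.add_apply, fderiv_add hds hdt, ContinuousLinearMap.add_apply]
      rw [h1, hlin x (s x) (t x) ξ (fderiv ℝ s x ξ) (fderiv ℝ t x ξ)]
      rfl
    · -- scalar homogeneity
      intro c s hs x ξ
      have hds : DifferentiableAt ℝ s x := (hs.differentiable (by simp)) x
      have h1 : Dform θ (c • s) x ξ = θ (x, c • s x) (ξ, c • fderiv ℝ s x ξ) := by
        simp only [Dform, Pi.smul_apply, fderiv_const_smul hds c,
          ContinuousLinearMap.smul_apply]
      rw [h1, lf_split hlin, lf_smul hlin hθ]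
      have h2 : ((0 : B), c • fderiv ℝ s x ξ) = c • ((0 : B), fderiv ℝ s x ξ) := by simp
      rw [h2, map_smul]
      have h5 : Dform θ s x ξ = θ (x, s x) (ξ, 0) + θ (x, 0) (0, fderiv ℝ s x ξ) :=
        lf_split hlin x (s x) ξ (fderiv ℝ s x ξ)
      rw [h5, smul_add]
    · -- Leibniz
      intro f s hf hs x ξ
      have hdf : DifferentiableAt ℝ f x := (hf.differentiable (by simp)) x
      have hds : DifferentiableAt ℝ s x := (hs.differentiable (by simp)) x
      have h1 : Dform θ (fun y => f y • s y) x ξ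
          = θ (x, f x • s x) (ξ, f x • fderiv ℝ s x ξ + fderiv ℝ f x ξ • s x) := by
        simp only [Dform, fderiv_fun_smul hdf hds, ContinuousLinearMap.add_apply,
          ContinuousLinearMap.smul_apply, ContinuousLinearMap.smulRight_apply]
      have h2 : ((0 : B), f x • fderiv ℝ s x ξ + fderiv ℝ f x ξ • s x)
          = f x • ((0 : B), fderiv ℝ s x ξ) + fderiv ℝ f x ξ • ((0 : B), s x) := by simp
      rw [h1, lf_split hlin, lf_smul hlin hθ, h2, map_add, map_smul, map_smul]
      have h5 : Dform θ s x ξ = θ (x, s x) (ξ, 0) + θ (x, 0) (0, fderiv ℝ s x ξ) :=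
        lf_split hlin x (s x) ξ (fderiv ℝ s x ξ)
      rw [h5, σform, smul_add]
      abel
    · -- surjectivity of the symbol
      intro x g
      obtain ⟨⟨ξ, ν⟩, h⟩ := hsurj (x, 0) g
      refine ⟨ν, ?_⟩
      have h2 : ((ξ, ν) : B × V) = (ξ, 0) + (0, ν) := by simp
      rw [h2, map_add, lf_zero hlin, zero_add] at h
      exact h
    · -- linearity of the symbol
      intro x
      constructor
      · intro v w
        have h2 : ((0 : B), v + w) = ((0 : B), v) + ((0 : B), w) := by simp
        simp only [σform, h2, map_add]
      · intro c v
        have h2 : ((0 : B), c • v) = c • ((0 : B), v) := by simp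
        simp only [σform, h2, map_smul]
  · -- converse direction
    intro D σ hadd hsmul hleib hσsurj
    classical
    set bV : Module.Basis (Fin (Module.finrank ℝ V)) ℝ V := Module.finBasis ℝ V with hbV
    -- D of the zero section vanishes
    have hzeroD : ∀ x ξ, D (fun _ => (0 : V)) x ξ = 0 := by
      intro x ξ
      have h0 : (fun _ : B => (0 : V)) = (0 : ℝ) • (fun _ : B => (0 : V)) := by
        funext y; simp
      rw [h0, hsmul 0 (fun _ => (0 : V)) contDiff_const]
      simp
    -- D is additive over finite sums
    have hDsum : ∀ (F : Finset (Fin (Module.finrank ℝ V))) (φ : Fin (Module.finrank ℝ V) → B → V),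
        (∀ i, ContDiff ℝ (⊤ : ℕ∞) (φ i)) → ∀ x ξ,
        D (fun y => ∑ i ∈ F, φ i y) x ξ = ∑ i ∈ F, D (φ i) x ξ := by
      intro F
      induction F using Finset.induction with
      | empty =>
        intro φ hφ x ξ
        simp only [Finset.sum_empty]
        exact hzeroD x ξ
      | insert a F ha ih =>
        intro φ hφ x ξ
        have h1 : (fun y => ∑ i ∈ insert a F, φ i y)
            = φ a + fun y => ∑ i ∈ F, φ i y := by
          funext y; rw [Finset.sum_insert ha]; rfl
        rw [h1, hadd _ _ (hφ a) (ContDiff.sum fun i _ => hφ i)]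
        simp only [Pi.add_apply, LinearMap.add_apply]
        rw [ih φ hφ x ξ, Finset.sum_insert ha]
    -- locality of D
    have hloc : ∀ (s : B → V), ContDiff ℝ (⊤ : ℕ∞) s → ∀ x ξ,
        D s x ξ = D (fun _ => s x) x ξ + σ x (fderiv ℝ s x ξ) := by
      intro s hs x ξ
      set si : Fin (Module.finrank ℝ V) → B → ℝ := fun i y => bV.coord i (s y) with hsidef
      have hsi : ∀ i, ContDiff ℝ (⊤ : ℕ∞) (si i) := fun i =>
        ((LinearMap.toContinuousLinearMap (bV.coord i)).contDiff).comp hs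
      have hdsi : ∀ i, DifferentiableAt ℝ (si i) x := fun i =>
        ((hsi i).differentiable (by simp)) x
      have hrepr : s = fun y => ∑ i, si i y • bV i := by
        funext y
        exact (bV.sum_repr (s y)).symm
      have hD1 : D s x ξ = ∑ i, D (fun y => si i y • bV i) x ξ := by
        conv_lhs => rw [hrepr]
        exact hDsum Finset.univ _ (fun i => (hsi i).smul contDiff_const) x ξ
      have hleib_i : ∀ i, D (fun y => si i y • bV i) x ξ
          = si i x • D (fun _ => bV i) x ξ + fderiv ℝ (si i) x ξ • σ x (bV i) :=
        fun i => hleib (si i) (fun _ => bV i) (hsi i) contDiff_const x ξ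
      have hconst : D (fun _ => s x) x ξ = ∑ i, si i x • D (fun _ => bV i) x ξ := by
        have h1 : (fun _ : B => s x) = fun _ : B => ∑ i, si i x • bV i := by
          funext y
          exact (bV.sum_repr (s x)).symm
        have h2 : (fun _ : B => ∑ i, si i x • bV i)
            = fun y : B => ∑ i, (fun j (_ : B) => si j x • bV j) i y := rfl
        rw [h1, h2, hDsum Finset.univ _ (fun i => contDiff_const) x ξ]
        refine Finset.sum_congr rfl fun i _ => ?_
        have h3 : (fun _ : B => si i x • bV i) = (si i x) • (fun _ : B => bV i) := rfl
        rw [h3, hsmul (si i x) (fun _ => bV i) contDiff_const]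
        simp
      have hfder : fderiv ℝ s x ξ = ∑ i, fderiv ℝ (si i) x ξ • bV i := by
        conv_lhs => rw [hrepr]
        rw [fderiv_fun_sum fun i _ => (hdsi i).smul_const (bV i)]
        rw [ContinuousLinearMap.sum_apply]
        refine Finset.sum_congr rfl fun i _ => ?_
        rw [fderiv_smul_const (hdsi i) (bV i), ContinuousLinearMap.smulRight_apply]
      rw [hD1, hconst, hfder, map_sum]
      rw [Finset.sum_congr rfl fun i _ => hleib_i i, Finset.sum_add_distrib]
      congr 1
      exact Finset.sum_congr rfl fun i _ => by rw [map_smul]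
    -- the canonical linear form
    set θ₀ : B × V → ((B × V) →ₗ[ℝ] Fv) := fun p =>
      (D (fun _ => p.2) p.1).comp (LinearMap.fst ℝ B V)
        + (σ p.1).comp (LinearMap.snd ℝ B V) with hθ₀
    have hθ₀app : ∀ (x : B) (v : V) (ξ : B) (ν : V),
        θ₀ (x, v) (ξ, ν) = D (fun _ => v) x ξ + σ x ν := by
      intro x v ξ ν
      simp [hθ₀]
    have hconstadd : ∀ v w : V, ∀ x ξ, D (fun _ => v + w) x ξ
        = D (fun _ => v) x ξ + D (fun _ => w) x ξ := by
      intro v w x ξ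
      have h1 : (fun _ : B => v + w) = (fun _ : B => v) + (fun _ : B => w) := rfl
      rw [h1, hadd _ _ contDiff_const contDiff_const]
      rfl
    refine ⟨θ₀, ⟨?_, ?_, ?_⟩, ?_⟩
    · -- IsLinearForm θ₀
      intro x v w ξ ν ω
      rw [hθ₀app, hθ₀app, hθ₀app, hconstadd, map_add]
      abel
    · -- Dform θ₀ = D on smooth sections
      intro s hs x ξ
      have h1 : Dform θ₀ s x ξ = θ₀ (x, s x) (ξ, fderiv ℝ s x ξ) := rfl
      rw [h1, hθ₀app]
      exact (hloc s hs x ξ).symm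
    · -- σform θ₀ = σ
      intro x v
      have h1 : σform θ₀ x v = θ₀ (x, 0) (0, v) := rfl
      rw [h1, hθ₀app]
      simp
    · -- uniqueness
      intro θ ⟨hlin, hDf, hσf⟩
      funext p
      obtain ⟨x, v⟩ := p
      apply LinearMap.ext
      rintro ⟨ξ, ν⟩
      have h1 : θ (x, v) (ξ, ν) = θ (x, v) (ξ, 0) + θ (x, 0) (0, ν) := lf_split hlin x v ξ ν
      have h2 : θ (x, v) (ξ, 0) = D (fun _ => v) x ξ := by
        have h3 := hDf (fun _ => v) contDiff_const x ξ
        have h4 : Dform θ (fun _ => v) x ξ = θ (x, v) (ξ, 0) := by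
          simp [Dform, fderiv_fun_const]
        rw [← h4, h3]
      have h5 : θ (x, 0) (0, ν) = σ x ν := hσf x ν
      rw [h1, h2, h5, hθ₀app]
end

section
/- A Pfaffian morphism φ: (P',θ') → (P,θ) is an abstract prolongation (i.e. g(θ') ⊂ ker dφ and κ_θ(dφ(u), dφ(v)) = 0 for all u,v ∈ ker θ') if and only if for every point p' ∈ P' the subspace dφ(ker θ'_{p'}) ⊂ T_{φ(p')}P is an integral element of (P,θ). -/
/-!
STATEMENT 15: A Pfaffian morphism φ : (P',θ') → (P,θ) is an abstract prolongation
(g(θ') ⊂ ker dφ and κ_θ(dφ(u),dφ(v)) = 0 for u,v ∈ ker θ') if and only if for every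
p' ∈ P' the subspace dφ(ker θ'_{p'}) ⊂ T_{φ(p')}P is an integral element of (P,θ).

Local model: fibrations are (charts of) smooth surjective submersions between
finite-dimensional spaces; tangent spaces are the ambient spaces; forms are families
of linear maps; the curvature `κ_θ(u,v) = θ([U,V])` is computed via extensions of
`u, v` to vector fields tangent to `ker θ`, with `⁅X,Y⁆ = (dY)(X) − (dX)(Y)`.
-/

variable {P' P M N' N : Type*}
  [NormedAddCommGroup P'] [NormedSpace ℝ P'] [FiniteDimensional ℝ P']
  [NormedAddCommGroup P] [NormedSpace ℝ P] [FiniteDimensional ℝ P]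
  [NormedAddCommGroup M] [NormedSpace ℝ M] [FiniteDimensional ℝ M]
  [NormedAddCommGroup N'] [NormedSpace ℝ N']
  [NormedAddCommGroup N] [NormedSpace ℝ N]

/-- Lie bracket of vector fields (local model). -/
noncomputable def lieB {Q : Type*} [NormedAddCommGroup Q] [NormedSpace ℝ Q]
    (X Y : Q → Q) : Q → Q :=
  fun p => fderiv ℝ Y p (X p) - fderiv ℝ X p (Y p)

/-- `(π, θ)` is a Pfaffian fibration. -/
def IsPfaffianFibration {P M N : Type*}
    [NormedAddCommGroup P] [NormedSpace ℝ P] [NormedAddCommGroup M] [NormedSpace ℝ M]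
    [NormedAddCommGroup N] [NormedSpace ℝ N]
    (π : P → M) (θ : P → (P →ₗ[ℝ] N)) : Prop :=
  ContDiff ℝ (⊤ : ℕ∞) π ∧ Function.Surjective π ∧
  (∀ p, Function.Surjective (fderiv ℝ π p)) ∧
  (∀ p, Function.Surjective (θ p)) ∧
  (∀ (p : P) (ξ : M), ∃ u : P, θ p u = 0 ∧ fderiv ℝ π p u = ξ) ∧
  (∀ X Y : P → P, ContDiff ℝ (⊤ : ℕ∞) X → ContDiff ℝ (⊤ : ℕ∞) Y →
    (∀ p, θ p (X p) = 0 ∧ fderiv ℝ π p (X p) = 0) →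
    (∀ p, θ p (Y p) = 0 ∧ fderiv ℝ π p (Y p) = 0) →
    ∀ p, θ p (lieB X Y p) = 0 ∧ fderiv ℝ π p (lieB X Y p) = 0)

/-- `V` is an integral element of `(P,θ)` at `p`: a subspace of dimension `dim M`,
contained in `ker θ_p`, complementary to the vertical space `T^π_p P`, and on which
the curvature `κ_θ` vanishes. -/
def IsIntegralElement {P M N : Type*}
    [NormedAddCommGroup P] [NormedSpace ℝ P] [NormedAddCommGroup M] [NormedSpace ℝ M]
    [NormedAddCommGroup N] [NormedSpace ℝ N]
    (π : P → M) (θ : P → (P →ₗ[ℝ] N)) (p : P) (V : Submodule ℝ P) : Prop :=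
  Module.finrank ℝ V = Module.finrank ℝ M ∧
  V ≤ LinearMap.ker (θ p) ∧
  IsCompl V (LinearMap.ker (fderiv ℝ π p : P →ₗ[ℝ] M)) ∧
  ∀ u v : P, u ∈ V → v ∈ V →
    ∀ U W : P → P, ContDiff ℝ (⊤ : ℕ∞) U → ContDiff ℝ (⊤ : ℕ∞) W →
      (∀ q, θ q (U q) = 0) → (∀ q, θ q (W q) = 0) →
      U p = u → W p = v → θ p (lieB U W p) = 0

theorem prolongation_iff_integral_elements
    (π' : P' → M) (θ' : P' → (P' →ₗ[ℝ] N'))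
    (π : P → M) (θ : P → (P →ₗ[ℝ] N))
    (hP' : IsPfaffianFibration π' θ') (hP : IsPfaffianFibration π θ)
    -- Pfaffian morphism: surjective submersive bundle map over M with φ*θ = Φ ∘ θ'
    (φ : P' → P) (hφ : ContDiff ℝ (⊤ : ℕ∞) φ) (hbase : π ∘ φ = π')
    (hφsurj : Function.Surjective φ) (hφsub : ∀ p', Function.Surjective (fderiv ℝ φ p'))
    (Φ : P' → (N' →ₗ[ℝ] N))
    (hmor : ∀ (p' : P') (u : P'), θ (φ p') (fderiv ℝ φ p' u) = Φ p' (θ' p' u)) :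
    -- φ is an abstract prolongation ...
    ((∀ (p' : P') (u : P'), θ' p' u = 0 → fderiv ℝ π' p' u = 0 → fderiv ℝ φ p' u = 0) ∧
     (∀ (p' : P') (u v : P'), θ' p' u = 0 → θ' p' v = 0 →
        ∀ U W : P → P, ContDiff ℝ (⊤ : ℕ∞) U → ContDiff ℝ (⊤ : ℕ∞) W →
          (∀ q, θ q (U q) = 0) → (∀ q, θ q (W q) = 0) →
          U (φ p') = fderiv ℝ φ p' u → W (φ p') = fderiv ℝ φ p' v →
          θ (φ p') (lieB U W (φ p')) = 0)) ↔
    -- ... iff dφ(ker θ'_{p'}) is an integral element for every p'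
    (∀ p' : P', IsIntegralElement π θ (φ p')
        ((LinearMap.ker (θ' p')).map ((fderiv ℝ φ p' : P' →L[ℝ] P) : P' →ₗ[ℝ] P))) := by
  -- chain rule: dπ' = dπ ∘ dφ
  have hchain : ∀ (p' : P') (u : P'),
      fderiv ℝ π' p' u = fderiv ℝ π (φ p') (fderiv ℝ φ p' u) := by
    intro p' u
    have h1 : π' = π ∘ φ := hbase.symm
    rw [h1, fderiv_comp p' ((hP.1.differentiable (by simp)) (φ p'))
      ((hφ.differentiable (by simp)) p')]
    rfl
  -- membership in V
  have hmem : ∀ (p' : P') (w : P),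
      w ∈ (LinearMap.ker (θ' p')).map ((fderiv ℝ φ p' : P' →L[ℝ] P) : P' →ₗ[ℝ] P) ↔
      ∃ a : P', θ' p' a = 0 ∧ fderiv ℝ φ p' a = w := by
    intro p' w
    simp [Submodule.mem_map, LinearMap.mem_ker]
  -- V always lands in ker θ
  have hVker : ∀ (p' : P') (a : P'), θ' p' a = 0 → θ (φ p') (fderiv ℝ φ p' a) = 0 := by
    intro p' a ha
    rw [hmor p' a, ha, map_zero]
  constructor
  · rintro ⟨hA, hB⟩ p'
    set V := (LinearMap.ker (θ' p')).map ((fderiv ℝ φ p' : P' →L[ℝ] P) : P' →ₗ[ℝ] P) with hV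
    -- disjointness with vertical space
    have hdisj : Disjoint V (LinearMap.ker (fderiv ℝ π (φ p') : P →ₗ[ℝ] M)) := by
      rw [Submodule.disjoint_def]
      intro w hw hw'
      obtain ⟨a, ha, rfl⟩ := (hmem p' w).mp hw
      have hπa : fderiv ℝ π' p' a = 0 := by
        rw [hchain]
        exact LinearMap.mem_ker.mp hw'
      exact hA p' a ha hπa
    -- codisjointness
    have hcod : Codisjoint V (LinearMap.ker (fderiv ℝ π (φ p') : P →ₗ[ℝ] M)) := by
      rw [codisjoint_iff, eq_top_iff]
      intro w _
      obtain ⟨a, ha, hπa⟩ := hP'.2.2.2.2.1 p' (fderiv ℝ π (φ p') w)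
      refine Submodule.mem_sup.mpr ⟨fderiv ℝ φ p' a, (hmem p' _).mpr ⟨a, ha, rfl⟩,
        w - fderiv ℝ φ p' a, ?_, by abel⟩
      rw [LinearMap.mem_ker, map_sub, ContinuousLinearMap.coe_coe, ← hchain, hπa, sub_self]
    have hcompl : IsCompl V (LinearMap.ker (fderiv ℝ π (φ p') : P →ₗ[ℝ] M)) := ⟨hdisj, hcod⟩
    -- dimension count via restriction of dπ to V
    have hrank : Module.finrank ℝ V = Module.finrank ℝ M := by
      let e := ((fderiv ℝ π (φ p') : P →L[ℝ] M) : P →ₗ[ℝ] M).domRestrict V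
      have hinj : Function.Injective e := by
        intro x y hxy
        have hxy' : (x : P) - (y : P) ∈ LinearMap.ker (fderiv ℝ π (φ p') : P →ₗ[ℝ] M) := by
          rw [LinearMap.mem_ker, map_sub, ContinuousLinearMap.coe_coe]
          have : fderiv ℝ π (φ p') (x : P) = fderiv ℝ π (φ p') (y : P) := hxy
          rw [this, sub_self]
        have hxyV : (x : P) - (y : P) ∈ V := sub_mem x.2 y.2
        have : (x : P) - (y : P) = 0 := Submodule.disjoint_def.mp hdisj _ hxyV hxy'
        exact Subtype.ext (sub_eq_zero.mp this)
      have hsurj : Function.Surjective e := by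
        intro ξ
        obtain ⟨a, ha, hπa⟩ := hP'.2.2.2.2.1 p' ξ
        refine ⟨⟨fderiv ℝ φ p' a, (hmem p' _).mpr ⟨a, ha, rfl⟩⟩, ?_⟩
        show fderiv ℝ π (φ p') (fderiv ℝ φ p' a) = ξ
        rw [← hchain, hπa]
      exact (LinearEquiv.ofBijective e ⟨hinj, hsurj⟩).finrank_eq
    refine ⟨hrank, ?_, hcompl, ?_⟩
    · intro w hw
      obtain ⟨a, ha, rfl⟩ := (hmem p' w).mp hw
      exact LinearMap.mem_ker.mpr (hVker p' a ha)
    · intro u v hu hv U W hU hW hUθ hWθ hUp hWp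
      obtain ⟨a, ha, rfl⟩ := (hmem p' u).mp hu
      obtain ⟨b, hb, rfl⟩ := (hmem p' v).mp hv
      exact hB p' a b ha hb U W hU hW hUθ hWθ hUp hWp
  · intro h
    constructor
    · intro p' u hθu hπu
      have hint := h p'
      have hVmem : fderiv ℝ φ p' u ∈
          (LinearMap.ker (θ' p')).map ((fderiv ℝ φ p' : P' →L[ℝ] P) : P' →ₗ[ℝ] P) :=
        (hmem p' _).mpr ⟨u, hθu, rfl⟩
      have hkmem : fderiv ℝ φ p' u ∈ LinearMap.ker (fderiv ℝ π (φ p') : P →ₗ[ℝ] M) := by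
        rw [LinearMap.mem_ker, ContinuousLinearMap.coe_coe, ← hchain, hπu]
      exact Submodule.disjoint_def.mp hint.2.2.1.disjoint _ hVmem hkmem
    · intro p' u v hθu hθv U W hU hW hUθ hWθ hUp hWp
      exact (h p').2.2.2 _ _ ((hmem p' _).mpr ⟨u, hθu, rfl⟩)
        ((hmem p' _).mpr ⟨v, hθv, rfl⟩) U W hU hW hUθ hWθ hUp hWp
end
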